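/- arXiv:1902.02964 — 6 statements merged into one kernel-verified Lean document; each statement's English description precedes it below -/
import Mathlib

section
/- Let P be a Markov transition kernel on a Polish metric space (X, ψ, B) satisfying (B1), (B2), and (B3) (with a function Λ: X × X → [0,∞) such that Λ(x,y) ≥ (PV(x) + PV(y) + 1)/(V(x) + V(y) + 1) for all (x,y)). Then P has at most one stationary distribution, i.e., there is at most one probability measure π on X with πP = π. -/
/-!
Write `ψ_r(x, y) = ψ(x, y) ^ r * (V x + V y + 1) ^ (1 - r)` (`weightedDist V r`). Hölder's
inequality on a near-optimal coupling of `P(x, ·)` and `P(y, ·)` bounds its expectation by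
`(Γ ψ)^r (PV x + PV y + 1)^(1 - r) ≤ Γ^r Λ^(1 - r) ψ_r(x, y)`, so `P` maps bounded functions with
`ψ_r`-Lipschitz constant `K` to functions with constant `ρ K`, where `ρ = sup Γ^r Λ^(1 - r) < 1`.
If `π₁, π₂` are stationary, the integrals of such an `f` equal those of `Pⁿ f`, and integrating
the oscillation bound `min (2B) (ρⁿ K ψ_r)` against `π₁ ⊗ π₂` shows that they agree. As
`min ψ 1 ≤ ψ_r`, this applies to all `[0, 1]`-valued Lipschitz functions, and these determine a
finite Borel measure.
-/

open MeasureTheory ProbabilityTheory ENNReal Filter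

/-- A coupling of two measures: a measure on the product with the given marginals. -/
def IsCoupling {X : Type*} [MeasurableSpace X] (υ : Measure (X × X)) (μ ν : Measure X) : Prop :=
  υ.map Prod.fst = μ ∧ υ.map Prod.snd = ν

/-- The `L₁`-Wasserstein divergence `W_ψ` induced by the metric `ψ = dist` of `X`. -/
noncomputable def wassDist {X : Type*} [MeasurableSpace X] [PseudoMetricSpace X]
    (μ ν : Measure X) : ℝ≥0∞ :=
  ⨅ (υ : Measure (X × X)) (_ : IsProbabilityMeasure υ) (_ : IsCoupling υ μ ν),
    ∫⁻ p, ENNReal.ofReal (dist p.1 p.2) ∂υ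

/-- The `n`-step evolution `μ Pⁿ` of a measure under a Markov transition kernel. -/
noncomputable def stepN {X : Type*} [MeasurableSpace X] (P : Kernel X X) :
    ℕ → Measure X → Measure X
  | 0, μ => μ
  | n + 1, μ => (stepN P n μ).bind (fun x => P x)

/-- Membership in `P_ψ(X)`: `∫ ψ(x,·) dμ < ∞` for some `x`. -/
def memPpsi {X : Type*} [MeasurableSpace X] [PseudoMetricSpace X] (μ : Measure X) : Prop :=
  ∃ x : X, ∫⁻ y, ENNReal.ofReal (dist x y) ∂μ < ⊤

open Topology NNReal BoundedContinuousFunction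

section Coupling

variable {X : Type*} [MeasurableSpace X] {υ : Measure (X × X)} {μ ν : Measure X}

lemma isCoupling_prod [IsProbabilityMeasure μ] [IsProbabilityMeasure ν] :
    IsCoupling (μ.prod ν) μ ν :=
  ⟨by simp, by simp⟩

namespace IsCoupling

variable (h : IsCoupling υ μ ν)
include h

lemma integrable_fst {f : X → ℝ} (hf : Integrable f μ) : Integrable (fun p => f p.1) υ := by
  rw [← h.1] at hf
  exact hf.comp_measurable measurable_fst

lemma integrable_snd {f : X → ℝ} (hf : Integrable f ν) : Integrable (fun p => f p.2) υ := by
  rw [← h.2] at hf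
  exact hf.comp_measurable measurable_snd

lemma integral_fst {f : X → ℝ} (hf : AEStronglyMeasurable f μ) :
    ∫ p, f p.1 ∂υ = ∫ x, f x ∂μ := by
  rw [← h.1] at hf ⊢
  exact (integral_map measurable_fst.aemeasurable hf).symm

lemma integral_snd {f : X → ℝ} (hf : AEStronglyMeasurable f ν) :
    ∫ p, f p.2 ∂υ = ∫ x, f x ∂ν := by
  rw [← h.2] at hf ⊢
  exact (integral_map measurable_snd.aemeasurable hf).symm

lemma ofReal_abs_integral_sub_le {g : X → ℝ} (hgμ : Integrable g μ) (hgν : Integrable g ν)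
    {c : X → X → ℝ} (hgc : ∀ x y, |g x - g y| ≤ c x y) :
    ENNReal.ofReal |∫ x, g x ∂μ - ∫ x, g x ∂ν| ≤ ∫⁻ p, ENNReal.ofReal (c p.1 p.2) ∂υ := by
  rw [← h.integral_fst hgμ.1, ← h.integral_snd hgν.1,
    ← integral_sub (h.integrable_fst hgμ) (h.integrable_snd hgν), ← Real.enorm_eq_ofReal_abs]
  refine (enorm_integral_le_lintegral_enorm _).trans (lintegral_mono fun p => ?_)
  rw [Real.enorm_eq_ofReal_abs]
  exact ENNReal.ofReal_le_ofReal (hgc p.1 p.2)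

end IsCoupling

lemma exists_isCoupling_lintegral_lt_of_wassDist_lt [PseudoMetricSpace X] {t : ℝ≥0∞}
    (h : wassDist μ ν < t) :
    ∃ υ : Measure (X × X), IsProbabilityMeasure υ ∧ IsCoupling υ μ ν ∧
      ∫⁻ p, ENNReal.ofReal (dist p.1 p.2) ∂υ < t := by
  simpa only [wassDist, iInf_lt_iff, exists_prop] using h

end Coupling

section WeightedDist

variable {X : Type*} [PseudoMetricSpace X] {V : X → ℝ} {r : ℝ}

noncomputable def weightedDist (V : X → ℝ) (r : ℝ) (x y : X) : ℝ :=
  dist x y ^ r * (V x + V y + 1) ^ (1 - r)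

lemma measurable_weightedDist [MeasurableSpace X] [OpensMeasurableSpace X]
    [SecondCountableTopology X] (hV : Measurable V) :
    Measurable (Function.uncurry (weightedDist V r)) :=
  (measurable_dist.pow_const r).mul
    ((((hV.comp measurable_fst).add (hV.comp measurable_snd)).add_const 1).pow_const _)

variable (hV0 : ∀ x, 0 ≤ V x)
include hV0

lemma weightedDist_nonneg (x y : X) : 0 ≤ weightedDist V r x y := by
  have := hV0 x; have := hV0 y
  unfold weightedDist; positivity

lemma min_dist_one_le_weightedDist (hr0 : 0 < r) (hr1 : r ≤ 1) (x y : X) :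
    min (dist x y) 1 ≤ weightedDist V r x y := by
  have hW : 1 ≤ (V x + V y + 1) ^ (1 - r) :=
    Real.one_le_rpow (by linarith [hV0 x, hV0 y]) (by linarith)
  have hd : min (dist x y) 1 ≤ dist x y ^ r := by
    rcases le_total (dist x y) 1 with h | h
    · exact (min_le_left _ _).trans (Real.self_le_rpow_of_le_one dist_nonneg h hr1)
    · exact (min_le_right _ _).trans (Real.one_le_rpow h hr0.le)
  calc min (dist x y) 1 ≤ dist x y ^ r * 1 := by rwa [mul_one]
    _ ≤ weightedDist V r x y := by unfold weightedDist; gcongr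

lemma LipschitzWith.abs_sub_le_mul_weightedDist {f : X → ℝ} {K : ℝ≥0} (hf : LipschitzWith K f)
    (hf01 : ∀ x, f x ∈ Set.Icc 0 1) (hr0 : 0 < r) (hr1 : r ≤ 1) (x y : X) :
    |f x - f y| ≤ max K 1 * weightedDist V r x y := by
  calc |f x - f y| ≤ min (K * dist x y) 1 :=
        le_min (by simpa [Real.dist_eq] using hf.dist_le_mul x y)
          (abs_sub_le_of_nonneg_of_le (hf01 x).1 (hf01 x).2 (hf01 y).1 (hf01 y).2)
    _ ≤ max K 1 * min (dist x y) 1 := by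
        rcases le_total (dist x y) 1 with hd | hd
        · rw [min_eq_left hd]
          exact (min_le_left _ _).trans (by gcongr; exact le_max_left _ _)
        · rw [min_eq_right hd, mul_one]
          exact (min_le_right _ _).trans (le_max_right _ _)
    _ ≤ max K 1 * weightedDist V r x y := by
        gcongr
        exact min_dist_one_le_weightedDist hV0 hr0 hr1 x y

end WeightedDist

section WassersteinHolder

variable {X : Type*} [PseudoMetricSpace X] [MeasurableSpace X] [OpensMeasurableSpace X]
  [SecondCountableTopology X] {μ ν : Measure X} {V : X → ℝ} {r : ℝ}

lemma IsCoupling.lintegral_weightedDist_le {υ : Measure (X × X)} [IsProbabilityMeasure υ]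
    (h : IsCoupling υ μ ν) (hV0 : ∀ x, 0 ≤ V x) (hVμ : Integrable V μ) (hVν : Integrable V ν)
    (hr0 : 0 ≤ r) (hr1 : r ≤ 1) :
    ∫⁻ p, ENNReal.ofReal (weightedDist V r p.1 p.2) ∂υ ≤
      (∫⁻ p, ENNReal.ofReal (dist p.1 p.2) ∂υ) ^ r *
        ENNReal.ofReal (∫ x, V x ∂μ + ∫ x, V x ∂ν + 1) ^ (1 - r) := by
  have hW0 (p : X × X) : 0 ≤ V p.1 + V p.2 + 1 := by linarith [hV0 p.1, hV0 p.2]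
  have hW : Integrable (fun p : X × X => V p.1 + V p.2 + 1) υ :=
    ((h.integrable_fst hVμ).add (h.integrable_snd hVν)).add (integrable_const 1)
  have hW_integral : ∫ p, (V p.1 + V p.2 + 1) ∂υ = ∫ x, V x ∂μ + ∫ x, V x ∂ν + 1 := by
    rw [integral_add (f := fun p : X × X => V p.1 + V p.2)
        ((h.integrable_fst hVμ).add (h.integrable_snd hVν)) (integrable_const 1),
      integral_add (h.integrable_fst hVμ) (h.integrable_snd hVν), h.integral_fst hVμ.1,
      h.integral_snd hVν.1]
    simp
  rw [← hW_integral, ofReal_integral_eq_lintegral_ofReal hW (ae_of_all _ hW0)]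
  calc ∫⁻ p, ENNReal.ofReal (weightedDist V r p.1 p.2) ∂υ
      = ∫⁻ p, ENNReal.ofReal (dist p.1 p.2) ^ r *
          ENNReal.ofReal (V p.1 + V p.2 + 1) ^ (1 - r) ∂υ := by
        refine lintegral_congr fun p => ?_
        rw [weightedDist, ENNReal.ofReal_mul (by positivity),
          ENNReal.ofReal_rpow_of_nonneg dist_nonneg hr0,
          ENNReal.ofReal_rpow_of_nonneg (hW0 p) (by linarith)]
    _ ≤ _ := ENNReal.lintegral_mul_norm_pow_le measurable_dist.ennreal_ofReal.aemeasurable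
        hW.aemeasurable.ennreal_ofReal hr0 (by linarith) (by ring)

theorem abs_integral_sub_le_of_wassDist_le (hV0 : ∀ x, 0 ≤ V x)
    (hVμ : Integrable V μ) (hVν : Integrable V ν) (hr0 : 0 < r) (hr1 : r ≤ 1) {u : ℝ}
    (hu : 0 ≤ u) (hμν : wassDist μ ν ≤ ENNReal.ofReal u) {g : X → ℝ} (hgμ : Integrable g μ)
    (hgν : Integrable g ν) {K : ℝ} (hK : 0 ≤ K)
    (hgK : ∀ x y, |g x - g y| ≤ K * weightedDist V r x y) :
    |∫ x, g x ∂μ - ∫ x, g x ∂ν| ≤ K * u ^ r * (∫ x, V x ∂μ + ∫ x, V x ∂ν + 1) ^ (1 - r) := by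
  set c := ∫ x, V x ∂μ + ∫ x, V x ∂ν + 1
  have hc : 0 ≤ c := by
    have := integral_nonneg (μ := μ) (f := V) hV0
    have := integral_nonneg (μ := ν) (f := V) hV0
    linarith
  -- The infimum defining `wassDist` need not be attained: use couplings of cost `< t`, let `t ↓ u`.
  have key (t : ℝ) (ht : u < t) : |∫ x, g x ∂μ - ∫ x, g x ∂ν| ≤ K * t ^ r * c ^ (1 - r) := by
    obtain ⟨υ, _, hυ, hυt⟩ := exists_isCoupling_lintegral_lt_of_wassDist_lt
      (hμν.trans_lt ((ENNReal.ofReal_lt_ofReal_iff (hu.trans_lt ht)).2 ht))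
    have ht0 : 0 ≤ t := hu.trans ht.le
    rw [← ENNReal.ofReal_le_ofReal_iff (by positivity)]
    calc ENNReal.ofReal |∫ x, g x ∂μ - ∫ x, g x ∂ν|
        ≤ ∫⁻ p, ENNReal.ofReal (K * weightedDist V r p.1 p.2) ∂υ :=
          hυ.ofReal_abs_integral_sub_le hgμ hgν hgK
      _ = ENNReal.ofReal K * ∫⁻ p, ENNReal.ofReal (weightedDist V r p.1 p.2) ∂υ := by
          simp_rw [ENNReal.ofReal_mul hK]
          exact lintegral_const_mul' _ _ ENNReal.ofReal_ne_top
      _ ≤ ENNReal.ofReal K * (ENNReal.ofReal t ^ r * ENNReal.ofReal c ^ (1 - r)) := by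
          grw [hυ.lintegral_weightedDist_le hV0 hVμ hVν hr0.le hr1, hυt]
      _ = ENNReal.ofReal (K * t ^ r * c ^ (1 - r)) := by
          rw [ENNReal.ofReal_rpow_of_nonneg ht0 hr0.le,
            ENNReal.ofReal_rpow_of_nonneg hc (by linarith), ← ENNReal.ofReal_mul (by positivity),
            ← ENNReal.ofReal_mul hK, mul_assoc]
  have hcont : ContinuousAt (fun t => K * t ^ r * c ^ (1 - r)) u :=
    (continuousAt_const.mul (Real.continuousAt_rpow_const _ _ (Or.inr hr0.le))).mul
      continuousAt_const
  exact ge_of_tendsto (hcont.tendsto.mono_left nhdsWithin_le_nhds)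
    (eventually_nhdsWithin_of_forall (s := Set.Ioi u) key)

end WassersteinHolder

namespace ProbabilityTheory.Kernel

variable {X : Type*} [MeasurableSpace X] (P : Kernel X X)

noncomputable def markovOp (g : X → ℝ) (x : X) : ℝ :=
  ∫ z, g z ∂(P x)

variable {P}

lemma measurable_markovOp_iterate {g : X → ℝ} (hg : Measurable g) (n : ℕ) :
    Measurable ((markovOp P)^[n] g) := by
  induction n with
  | zero => exact hg
  | succ n ih =>
    rw [Function.iterate_succ_apply']
    exact ih.stronglyMeasurable.integral_kernel.measurable

lemma abs_markovOp_iterate_le [IsMarkovKernel P] {g : X → ℝ} {B : ℝ} (hB : ∀ x, |g x| ≤ B)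
    (n : ℕ) (x : X) : |(markovOp P)^[n] g x| ≤ B := by
  induction n generalizing x with
  | zero => exact hB x
  | succ n ih =>
    have hbound : ∀ᵐ z ∂(P x), ‖(markovOp P)^[n] g z‖ ≤ B := ae_of_all _ ih
    rw [Function.iterate_succ_apply', markovOp]
    simpa using norm_integral_le_of_norm_le_const hbound

lemma integral_markovOp_of_bind_eq {π : Measure X} (hπ : π.bind (fun x => P x) = π)
    {g : X → ℝ} (hg : Integrable g π) :
    ∫ x, markovOp P g x ∂π = ∫ x, g x ∂π := by
  have hπ' : P ∘ₘ π = π := hπ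
  rw [← hπ', Measure.comp_eq_comp_const_apply] at hg
  calc ∫ x, markovOp P g x ∂π = ∫ x, g x ∂(P ∘ₘ π) := by
        rw [Measure.comp_eq_comp_const_apply, Kernel.integral_comp hg, Kernel.const_apply]
        rfl
    _ = ∫ x, g x ∂π := by rw [hπ']

end ProbabilityTheory.Kernel

lemma tendsto_lintegral_ofReal_min_pow_mul {α : Type*} [MeasurableSpace α] (m : Measure α)
    [IsFiniteMeasure m] {c : α → ℝ} (hc : Measurable c) {ρ : ℝ} (hρ0 : 0 ≤ ρ) (hρ1 : ρ < 1)
    (M K : ℝ) :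
    Tendsto (fun n : ℕ => ∫⁻ a, ENNReal.ofReal (min M (ρ ^ n * K * c a)) ∂m) atTop (𝓝 0) := by
  have hpoint (a : α) :
      Tendsto (fun n : ℕ => ENNReal.ofReal (min M (ρ ^ n * K * c a))) atTop (𝓝 0) := by
    have h := ((tendsto_pow_atTop_nhds_zero_of_lt_one hρ0 hρ1).mul_const K).mul_const (c a)
    simpa [Function.comp_def] using
      (ENNReal.continuous_ofReal.tendsto _).comp (tendsto_const_nhds (x := M).min h)
  simpa using tendsto_lintegral_of_dominated_convergence (fun _ => ENNReal.ofReal M)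
    (fun n => (measurable_const.min (measurable_const.mul hc)).ennreal_ofReal)
    (fun n => ae_of_all _ fun a => ENNReal.ofReal_le_ofReal (min_le_left _ _))
    (by simp [lintegral_const, ENNReal.mul_eq_top]) (ae_of_all _ hpoint)

open Kernel

section Contraction

variable {X : Type*} [MeasurableSpace X]

def ContractsLipschitz (P : Kernel X X) (c : X → X → ℝ) (ρ : ℝ) : Prop :=
  ∀ g : X → ℝ, Measurable g → ∀ B, (∀ x, |g x| ≤ B) → ∀ K, 0 ≤ K →
    (∀ x y, |g x - g y| ≤ K * c x y) → ∀ x y, |markovOp P g x - markovOp P g y| ≤ ρ * K * c x y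

variable {P : Kernel X X} [IsMarkovKernel P] {c : X → X → ℝ} {ρ : ℝ}

lemma ContractsLipschitz.abs_markovOp_iterate_sub_le (hP : ContractsLipschitz P c ρ)
    (hρ0 : 0 ≤ ρ) {f : X → ℝ} (hf : Measurable f) {B : ℝ} (hB : ∀ x, |f x| ≤ B) {K : ℝ}
    (hK : 0 ≤ K) (hfK : ∀ x y, |f x - f y| ≤ K * c x y) (n : ℕ) (x y : X) :
    |(markovOp P)^[n] f x - (markovOp P)^[n] f y| ≤ ρ ^ n * K * c x y := by
  induction n generalizing x y with
  | zero => simpa using hfK x y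
  | succ n ih =>
    simp only [Function.iterate_succ_apply']
    calc _ ≤ ρ * (ρ ^ n * K) * c x y :=
          hP _ (measurable_markovOp_iterate hf n) B (abs_markovOp_iterate_le hB n) _
            (by positivity) ih x y
      _ = ρ ^ (n + 1) * K * c x y := by ring

theorem ContractsLipschitz.integral_eq (hP : ContractsLipschitz P c ρ)
    (hc : Measurable (Function.uncurry c)) (hρ0 : 0 ≤ ρ) (hρ1 : ρ < 1) {π₁ π₂ : Measure X}
    [IsProbabilityMeasure π₁] [IsProbabilityMeasure π₂] (h₁ : π₁.bind (fun x => P x) = π₁)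
    (h₂ : π₂.bind (fun x => P x) = π₂) {f : X → ℝ} (hf : Measurable f) {B : ℝ}
    (hB : ∀ x, |f x| ≤ B) {K : ℝ} (hK : 0 ≤ K) (hfK : ∀ x y, |f x - f y| ≤ K * c x y) :
    ∫ x, f x ∂π₁ = ∫ x, f x ∂π₂ := by
  have hint (π : Measure X) [IsFiniteMeasure π] (n : ℕ) : Integrable ((markovOp P)^[n] f) π :=
    .of_bound (measurable_markovOp_iterate hf n).aestronglyMeasurable B
      (ae_of_all _ (abs_markovOp_iterate_le hB n))
  have hstat (π : Measure X) [IsFiniteMeasure π] (hπ : π.bind (fun x => P x) = π) (n : ℕ) :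
      ∫ x, (markovOp P)^[n] f x ∂π = ∫ x, f x ∂π := by
    induction n with
    | zero => rfl
    | succ n ih => rw [Function.iterate_succ_apply', integral_markovOp_of_bind_eq hπ (hint π n), ih]
  -- Truncating at `2 * B` keeps the bound integrable on `π₁ ⊗ π₂`, which `c` need not be.
  have hbound (n : ℕ) : ENNReal.ofReal |∫ x, f x ∂π₁ - ∫ x, f x ∂π₂| ≤
      ∫⁻ p, ENNReal.ofReal (min (2 * B) (ρ ^ n * K * c p.1 p.2)) ∂(π₁.prod π₂) := by
    rw [← hstat π₁ h₁ n, ← hstat π₂ h₂ n]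
    refine isCoupling_prod.ofReal_abs_integral_sub_le (hint π₁ n) (hint π₂ n) fun x y =>
      le_min ?_ (hP.abs_markovOp_iterate_sub_le hρ0 hf hB hK hfK n x y)
    calc _ ≤ |(markovOp P)^[n] f x| + |(markovOp P)^[n] f y| := abs_sub _ _
      _ ≤ 2 * B := by linarith [abs_markovOp_iterate_le (P := P) hB n x,
        abs_markovOp_iterate_le (P := P) hB n y]
  have hzero := ge_of_tendsto' (tendsto_lintegral_ofReal_min_pow_mul _ hc hρ0 hρ1 _ _) hbound
  rwa [nonpos_iff_eq_zero, ENNReal.ofReal_eq_zero, abs_nonpos_iff, sub_eq_zero] at hzero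

end Contraction

theorem contractsLipschitz_weightedDist {X : Type*} [PseudoMetricSpace X] [MeasurableSpace X]
    [OpensMeasurableSpace X] [SecondCountableTopology X] {P : Kernel X X} [IsMarkovKernel P]
    {V : X → ℝ} (hV0 : ∀ x, 0 ≤ V x) (hPV : ∀ x, Integrable V (P x)) {r : ℝ} (hr0 : 0 < r)
    (hr1 : r ≤ 1) {Γ Λ : X → X → ℝ} (hΓ0 : ∀ x y, 0 ≤ Γ x y) (hΛ0 : ∀ x y, 0 ≤ Λ x y)
    (hΓ : ∀ x y, wassDist (P x) (P y) ≤ ENNReal.ofReal (Γ x y * dist x y))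
    (hΛ : ∀ x y, ((∫ z, V z ∂(P x)) + (∫ z, V z ∂(P y)) + 1) / (V x + V y + 1) ≤ Λ x y)
    {ρ : ℝ} (hρ : ∀ x y, Γ x y ^ r * Λ x y ^ (1 - r) ≤ ρ) :
    ContractsLipschitz P (weightedDist V r) ρ := by
  intro g hg B hB K hK hgK x y
  have hgP (x : X) : Integrable g (P x) := .of_bound hg.aestronglyMeasurable B (ae_of_all _ hB)
  have hW : 0 < V x + V y + 1 := by linarith [hV0 x, hV0 y]
  have hPV0 : 0 ≤ ∫ z, V z ∂(P x) + ∫ z, V z ∂(P y) + 1 := by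
    have := integral_nonneg (μ := P x) (f := V) hV0
    have := integral_nonneg (μ := P y) (f := V) hV0
    linarith
  have hd0 : 0 ≤ Γ x y * dist x y := mul_nonneg (hΓ0 x y) dist_nonneg
  calc |markovOp P g x - markovOp P g y|
      ≤ K * (Γ x y * dist x y) ^ r * (∫ z, V z ∂(P x) + ∫ z, V z ∂(P y) + 1) ^ (1 - r) :=
        abs_integral_sub_le_of_wassDist_le hV0 (hPV x) (hPV y) hr0 hr1 hd0 (hΓ x y) (hgP x)
          (hgP y) hK hgK
    _ ≤ K * (Γ x y * dist x y) ^ r * (Λ x y * (V x + V y + 1)) ^ (1 - r) := by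
        gcongr
        exact (div_le_iff₀ hW).1 (hΛ x y)
    _ = K * (Γ x y ^ r * Λ x y ^ (1 - r)) * weightedDist V r x y := by
        rw [Real.mul_rpow (hΓ0 x y) dist_nonneg, Real.mul_rpow (hΛ0 x y) hW.le, weightedDist]
        ring
    _ ≤ K * ρ * weightedDist V r x y := by
        have := weightedDist_nonneg hV0 (r := r) x y
        gcongr
        exact hρ x y
    _ = ρ * K * weightedDist V r x y := by ring

theorem MeasureTheory.ext_of_forall_integral_eq_of_lipschitzWith {X : Type*}
    [PseudoMetricSpace X] [MeasurableSpace X] [BorelSpace X] {μ ν : Measure X}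
    [IsFiniteMeasure μ] [IsFiniteMeasure ν]
    (h : ∀ (f : X → ℝ) (K : ℝ≥0), LipschitzWith K f → (∀ x, f x ∈ Set.Icc 0 1) →
      ∫ x, f x ∂μ = ∫ x, f x ∂ν) :
    μ = ν := by
  have hclosed (F : Set X) (hF : IsClosed F) : μ F = ν F := by
    let fs (n : ℕ) : X →ᵇ ℝ≥0 := thickenedIndicator (Nat.one_div_pos_of_nat (n := n)) F
    have hfs : Tendsto (fun n x => fs n x) atTop (𝓝 (F.indicator fun _ => 1)) := by
      simpa only [hF.closure_eq] using thickenedIndicator_tendsto_indicator_closure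
        (fun _ => Nat.one_div_pos_of_nat) tendsto_one_div_add_atTop_nhds_zero_nat F
    have hfs1 (n : ℕ) (x : X) : fs n x ≤ 1 := thickenedIndicator_le_one _ F x
    have heq (n : ℕ) : ∫⁻ x, fs n x ∂μ = ∫⁻ x, fs n x ∂ν := by
      rw [← ENNReal.ofReal_toReal (lintegral_lt_top_of_nnreal μ _).ne,
        ← ENNReal.ofReal_toReal (lintegral_lt_top_of_nnreal ν _).ne,
        toReal_lintegral_coe_eq_integral,
        toReal_lintegral_coe_eq_integral,
        h (fun x => fs n x) _ (lipschitzWith_thickenedIndicator _ F)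
          fun x => ⟨NNReal.coe_nonneg _, hfs1 n x⟩]
    have hμ := measure_of_cont_bdd_of_tendsto_indicator μ hF.measurableSet fs hfs1 hfs
    simp_rw [heq] at hμ
    exact tendsto_nhds_unique hμ
      (measure_of_cont_bdd_of_tendsto_indicator ν hF.measurableSet fs hfs1 hfs)
  refine ext_of_generate_finite _ ?_ isPiSystem_isClosed hclosed (hclosed _ isClosed_univ)
  rw [BorelSpace.measurable_eq (α := X), borel_eq_generateFrom_isClosed]

theorem stmt1_general {X : Type*} [MetricSpace X] [SecondCountableTopology X]
    [MeasurableSpace X] [BorelSpace X]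
    (P : Kernel X X) [IsMarkovKernel P]
    -- (B1)
    (V : X → ℝ) (hVmeas : Measurable V) (hV0 : ∀ x, 0 ≤ V x)
    (hPVfin : ∀ x : X, Integrable V (P x))
    -- (B2)
    (Γ : X → X → ℝ) (hΓ0 : ∀ x y, 0 ≤ Γ x y)
    (hB2 : ∀ x y : X, wassDist (P x) (P y) ≤ ENNReal.ofReal (Γ x y * dist x y))
    -- the function Λ
    (Λ : X → X → ℝ) (hΛ0 : ∀ x y, 0 ≤ Λ x y)
    (hΛ : ∀ x y : X,
      ((∫ z, V z ∂(P x)) + (∫ z, V z ∂(P y)) + 1) / (V x + V y + 1) ≤ Λ x y)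
    -- (B3)
    (hB3 : ∃ r ρ : ℝ, 0 < r ∧ r < 1 ∧
      IsLUB (Set.range fun p : X × X => Γ p.1 p.2 ^ r * Λ p.1 p.2 ^ (1 - r)) ρ ∧ ρ < 1) :
    ∀ π₁ π₂ : Measure X, IsProbabilityMeasure π₁ → IsProbabilityMeasure π₂ →
      π₁.bind (fun x => P x) = π₁ → π₂.bind (fun x => P x) = π₂ → π₁ = π₂ := by
  intro π₁ π₂ _ _ h₁ h₂
  obtain ⟨r, ρ, hr0, hr1, hρ, hρ1⟩ := hB3
  have hΓΛ (x y : X) : Γ x y ^ r * Λ x y ^ (1 - r) ≤ ρ := hρ.1 ⟨(x, y), rfl⟩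
  obtain ⟨x₀⟩ := nonempty_of_isProbabilityMeasure π₁
  have hρ0 : 0 ≤ ρ := by
    have := hΓ0 x₀ x₀
    have := hΛ0 x₀ x₀
    exact (by positivity : 0 ≤ Γ x₀ x₀ ^ r * Λ x₀ x₀ ^ (1 - r)).trans (hΓΛ x₀ x₀)
  have hP : ContractsLipschitz P (weightedDist V r) ρ :=
    contractsLipschitz_weightedDist hV0 hPVfin hr0 hr1.le hΓ0 hΛ0 hB2 hΛ hΓΛ
  refine ext_of_forall_integral_eq_of_lipschitzWith fun f K hf hf01 => ?_
  exact hP.integral_eq (measurable_weightedDist hVmeas) hρ0 hρ1 h₁ h₂ hf.continuous.measurable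
    (B := 1) (fun x => abs_le.2 ⟨by linarith [(hf01 x).1], (hf01 x).2⟩)
    (zero_le_one.trans (le_max_right _ _)) (hf.abs_sub_le_mul_weightedDist hV0 hf01 hr0 hr1.le)

/-- Under (B1), (B2) and (B3), the Markov transition kernel `P` has at most
one stationary distribution. -/
theorem stmt1 {X : Type*} [MetricSpace X] [CompleteSpace X] [SecondCountableTopology X]
    [MeasurableSpace X] [BorelSpace X]
    (P : Kernel X X) [IsMarkovKernel P]
    -- (B1)
    (V : X → ℝ) (hVmeas : Measurable V) (hV0 : ∀ x, 0 ≤ V x)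
    (a : ℝ) (ha : 0 < a)
    (hB1 : ∀ x y : X, a⁻¹ * dist x y ≤ V x + V y + 1)
    (hPVfin : ∀ x : X, Integrable V (P x))
    -- (B2)
    (Γ : X → X → ℝ) (hΓmeas : Measurable (Function.uncurry Γ)) (hΓ0 : ∀ x y, 0 ≤ Γ x y)
    (hB2 : ∀ x y : X, wassDist (P x) (P y) ≤ ENNReal.ofReal (Γ x y * dist x y))
    -- the function Λ
    (Λ : X → X → ℝ) (hΛ0 : ∀ x y, 0 ≤ Λ x y)
    (hΛ : ∀ x y : X,
      ((∫ z, V z ∂(P x)) + (∫ z, V z ∂(P y)) + 1) / (V x + V y + 1) ≤ Λ x y)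
    -- (B3)
    (hB3 : ∃ r ρ : ℝ, 0 < r ∧ r < 1 ∧
      IsLUB (Set.range fun p : X × X => Γ p.1 p.2 ^ r * Λ p.1 p.2 ^ (1 - r)) ρ ∧ ρ < 1) :
    ∀ π₁ π₂ : Measure X, IsProbabilityMeasure π₁ → IsProbabilityMeasure π₂ →
      π₁.bind (fun x => P x) = π₁ → π₂.bind (fun x => P x) = π₂ → π₁ = π₂ :=
  stmt1_general P V hVmeas hV0 hPVfin Γ hΓ0 hB2 Λ hΛ0 hΛ hB3
end

section
/- Let Γ: X × X → [0,∞) and Λ: X × X → [0,∞) be functions on a product space X × X. Suppose sup_{(x,y) ∈ X×X} min(Γ(x,y), Λ(x,y)) < 1 and that max(0, sup over {(x,y): Λ(x,y) > Γ(x,y)} of log Λ(x,y)/(log Λ(x,y) − log Γ(x,y))) < min(1, inf over {(x,y): Λ(x,y) < Γ(x,y)} of log Λ(x,y)/(log Λ(x,y) − log Γ(x,y))). Then for every r strictly between these two quantities, sup_{(x,y) ∈ X×X} Γ(x,y)^r Λ(x,y)^{1−r} < 1; in particular there exists r ∈ (0,1) with sup_{(x,y)} Γ(x,y)^r Λ(x,y)^{1−r}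 < 1. -/
set_option maxHeartbeats 1000000 in
/-- Remark 3. Sufficient conditions for (B3): if
`sup min(Γ,Λ) < 1` and the indicated sup/inf of `log Λ / (log Λ − log Γ)` (with the
conventions `sup ∅ = 0`, `inf ∅ = 1`, encoded by inserting `0` resp. `1` into the sets)
are in the right order, then for every `r` strictly between them,
`sup Γ^r Λ^{1−r} < 1`; in particular such an `r ∈ (0,1)` exists. -/
theorem stmt10 {X : Type*} [Nonempty X] (Γ Λ : X → X → ℝ)
    (hΓ0 : ∀ x y, 0 ≤ Γ x y) (hΛ0 : ∀ x y, 0 ≤ Λ x y)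
    -- sup_{(x,y)} min(Γ(x,y), Λ(x,y)) < 1
    (hmin : ∃ m : ℝ, m < 1 ∧ ∀ x y, min (Γ x y) (Λ x y) ≤ m)
    (lo hi : ℝ)
    -- lo = max(0, sup over {Λ > Γ} of log Λ / (log Λ − log Γ))
    (hlo : IsLUB (insert (0 : ℝ) {t : ℝ | ∃ x y, Γ x y < Λ x y ∧
      t = Real.log (Λ x y) / (Real.log (Λ x y) - Real.log (Γ x y))}) lo)
    -- hi = min(1, inf over {Λ < Γ} of log Λ / (log Λ − log Γ))
    (hhi : IsGLB (insert (1 : ℝ) {t : ℝ | ∃ x y, Λ x y < Γ x y ∧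
      t = Real.log (Λ x y) / (Real.log (Λ x y) - Real.log (Γ x y))}) hi)
    (hlohi : lo < hi) :
    (∀ r : ℝ, lo < r → r < hi →
      ∃ ρ : ℝ, ρ < 1 ∧ ∀ x y, Γ x y ^ r * Λ x y ^ (1 - r) ≤ ρ) ∧
    ∃ r : ℝ, 0 < r ∧ r < 1 ∧ ∃ ρ : ℝ, ρ < 1 ∧ ∀ x y, Γ x y ^ r * Λ x y ^ (1 - r) ≤ ρ := by
  obtain ⟨m0, hm01, hb0⟩ := hmin
  set m : ℝ := max m0 (1/2) with hmdef
  have hm1 : m < 1 := max_lt hm01 (by norm_num)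
  have hmpos : (0:ℝ) < m := lt_of_lt_of_le (by norm_num) (le_max_right _ _)
  have hb : ∀ x y, min (Γ x y) (Λ x y) ≤ m := fun x y => (hb0 x y).trans (le_max_left _ _)
  have hlo0 : (0:ℝ) ≤ lo := hlo.1 (Set.mem_insert _ _)
  have hhi1 : hi ≤ 1 := hhi.1 (Set.mem_insert _ _)
  have hL : (0:ℝ) < -Real.log m := by
    have := Real.log_neg hmpos hm1; linarith
  set L : ℝ := -Real.log m with hLdef
  have key : ∀ r : ℝ, lo < r → r < hi →
      ∃ ρ : ℝ, ρ < 1 ∧ ∀ x y, Γ x y ^ r * Λ x y ^ (1 - r) ≤ ρ := by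
    intro r hrlo hrhi
    have hr0 : 0 < r := lt_of_le_of_lt hlo0 hrlo
    have hr1 : r < 1 := lt_of_lt_of_le hrhi hhi1
    have hr1' : 0 < 1 - r := by linarith
    set c1 : ℝ := Real.exp (L * (lo - r)) with hc1def
    set c2 : ℝ := Real.exp (L * (r - hi)) with hc2def
    refine ⟨max m (max (m ^ r) (max (m ^ (1-r)) (max c1 c2))), ?_, ?_⟩
    · refine max_lt hm1 (max_lt ?_ (max_lt ?_ (max_lt ?_ ?_)))
      · exact Real.rpow_lt_one hmpos.le hm1 hr0
      · exact Real.rpow_lt_one hmpos.le hm1 hr1'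
      · rw [hc1def]
        have : L * (lo - r) < 0 := mul_neg_of_pos_of_neg hL (by linarith)
        calc Real.exp (L * (lo - r)) < Real.exp 0 := Real.exp_lt_exp.mpr this
          _ = 1 := Real.exp_zero
      · rw [hc2def]
        have : L * (r - hi) < 0 := mul_neg_of_pos_of_neg hL (by linarith)
        calc Real.exp (L * (r - hi)) < Real.exp 0 := Real.exp_lt_exp.mpr this
          _ = 1 := Real.exp_zero
    · intro x y
      set a := Γ x y with hadef
      set b := Λ x y with hbdef
      have ha0 : 0 ≤ a := hΓ0 x y
      have hb0' : 0 ≤ b := hΛ0 x y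
      have hmin' : min a b ≤ m := hb x y
      have hρ0 : (0:ℝ) ≤ max m (max (m ^ r) (max (m ^ (1-r)) (max c1 c2))) :=
        le_max_of_le_left hmpos.le
      rcases eq_or_lt_of_le ha0 with ha | ha
      · rw [← ha, Real.zero_rpow hr0.ne', zero_mul]; exact hρ0
      rcases eq_or_lt_of_le hb0' with hb' | hb'
      · rw [← hb', Real.zero_rpow hr1'.ne', mul_zero]; exact hρ0
      rcases lt_trichotomy a b with hab | hab | hab
      · -- a < b, so a ≤ m
        have ham : a ≤ m := by rwa [min_eq_left hab.le] at hmin'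
        rcases le_or_gt b 1 with hb1 | hb1
        · have h1 : a ^ r * b ^ (1-r) ≤ m ^ r := by
            calc a ^ r * b ^ (1-r) ≤ a ^ r * 1 :=
                  mul_le_mul_of_nonneg_left (Real.rpow_le_one hb0' hb1 hr1'.le)
                    (Real.rpow_nonneg ha0 r)
              _ = a ^ r := mul_one _
              _ ≤ m ^ r := Real.rpow_le_rpow ha0 ham hr0.le
          exact h1.trans (le_max_of_le_right (le_max_left _ _))
        · -- b > 1 : use the sup constraint
          set d : ℝ := Real.log b - Real.log a with hddef
          have hlogb : 0 < Real.log b := Real.log_pos hb1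
          have hloga : Real.log a ≤ Real.log m := Real.log_le_log ha ham
          have hdpos : 0 < d := by
            have : Real.log m < 0 := Real.log_neg hmpos hm1
            simp only [hddef]; linarith
          have hLd : L ≤ d := by simp only [hLdef, hddef]; linarith
          set t : ℝ := Real.log b / d with htdef
          have htlo : t ≤ lo := hlo.1 (Set.mem_insert_of_mem _ ⟨x, y, hab, rfl⟩)
          have htd : t * d = Real.log b := div_mul_cancel₀ _ hdpos.ne'
          have hexp : a ^ r * b ^ (1-r) = Real.exp (Real.log a * r + Real.log b * (1-r)) := by
            rw [Real.rpow_def_of_pos ha, Real.rpow_def_of_pos hb', ← Real.exp_add]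
          rw [hexp]
          have harith : Real.log a * r + Real.log b * (1-r) ≤ L * (lo - r) := by
            have heq : Real.log a * r + Real.log b * (1-r) = d * (t - r) := by
              have hla : Real.log a = Real.log b - d := by simp [hddef]
              rw [hla]; nlinarith [htd]
            rw [heq]
            have h1 : d * (t - r) ≤ L * (t - r) :=
              mul_le_mul_of_nonpos_right hLd (by linarith)
            have h2 : L * (t - r) ≤ L * (lo - r) :=
              mul_le_mul_of_nonneg_left (by linarith) hL.le
            linarith
          calc Real.exp (Real.log a * r + Real.log b * (1-r)) ≤ c1 := Real.exp_le_exp.mpr harith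
            _ ≤ _ := le_max_of_le_right (le_max_of_le_right (le_max_of_le_right (le_max_left _ _)))
      · -- a = b
        have : a ^ r * b ^ (1-r) = a := by
          rw [← hab, ← Real.rpow_add ha]; norm_num
        rw [this]
        have : a ≤ m := ((min_eq_left hab.le).symm.le).trans hmin'
        exact this.trans (le_max_left _ _)
      · -- b < a, so b ≤ m
        have hbm : b ≤ m := by rwa [min_eq_right hab.le] at hmin'
        rcases le_or_gt a 1 with ha1 | ha1
        · have h1 : a ^ r * b ^ (1-r) ≤ m ^ (1-r) := by
            calc a ^ r * b ^ (1-r) ≤ 1 * b ^ (1-r) :=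
                  mul_le_mul_of_nonneg_right (Real.rpow_le_one ha0 ha1 hr0.le)
                    (Real.rpow_nonneg hb0' _)
              _ = b ^ (1-r) := one_mul _
              _ ≤ m ^ (1-r) := Real.rpow_le_rpow hb0' hbm hr1'.le
          exact h1.trans (le_max_of_le_right (le_max_of_le_right (le_max_left _ _)))
        · -- a > 1 : use the inf constraint
          set d : ℝ := Real.log a - Real.log b with hddef
          have hloga : 0 < Real.log a := Real.log_pos ha1
          have hlogb : Real.log b ≤ Real.log m := Real.log_le_log hb' hbm
          have hdpos : 0 < d := by
            have : Real.log m < 0 := Real.log_neg hmpos hm1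
            simp only [hddef]; linarith
          have hLd : L ≤ d := by simp only [hLdef, hddef]; linarith
          set t : ℝ := Real.log b / (Real.log b - Real.log a) with htdef
          have hthi : hi ≤ t := hhi.1 (Set.mem_insert_of_mem _ ⟨x, y, hab, rfl⟩)
          have htd : t * d = -Real.log b := by
            have : Real.log b - Real.log a = -d := by rw [hddef]; ring
            rw [htdef, this, div_neg, neg_mul, div_mul_cancel₀ _ hdpos.ne']
          have hexp : a ^ r * b ^ (1-r) = Real.exp (Real.log a * r + Real.log b * (1-r)) := by
            rw [Real.rpow_def_of_pos ha, Real.rpow_def_of_pos hb', ← Real.exp_add]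
          rw [hexp]
          have harith : Real.log a * r + Real.log b * (1-r) ≤ L * (r - hi) := by
            have heq : Real.log a * r + Real.log b * (1-r) = d * (r - t) := by
              have hla : Real.log a = Real.log b + d := by simp [hddef]
              rw [hla]; nlinarith [htd]
            rw [heq]
            have h1 : d * (r - t) ≤ L * (r - t) :=
              mul_le_mul_of_nonpos_right hLd (by linarith)
            have h2 : L * (r - t) ≤ L * (r - hi) :=
              mul_le_mul_of_nonneg_left (by linarith) hL.le
            linarith
          calc Real.exp (Real.log a * r + Real.log b * (1-r)) ≤ c2 := Real.exp_le_exp.mpr harith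
            _ ≤ _ := le_max_of_le_right (le_max_of_le_right (le_max_of_le_right (le_max_right _ _)))
  refine ⟨key, (lo + hi) / 2, by linarith, by linarith, key _ (by linarith) (by linarith)⟩
end

section
/- Let P be an Mtk on a Polish metric space (X, ψ, B) with ψ bounded above by 1, satisfying (C1) with V̄: X → [1,∞), η' ∈ [0,1), L' ∈ [0,∞), and (C2) with γ' ∈ (0,1) and δ' > 0. Set L = L' + η'/2 − 1/2, λ = 2L'(1−η')/(2L'+δ') + η', J = (2L'+δ')/(1−η') + 2L'/λ, ρ^DM = exp(−(log λ · log γ')/(log J − log γ')), and r = (log(2L+1) − log λ)/(log(2L+1) − log λ − log γ'). Then: L' ≥ 1 − η' > 0; λ ∈ (η', 1) and J > 1; L ≥ 0; r lies in the interval (log(2L+1)/(log(2L+1) − log γ'), 1); ρ_r := max(γ'^r (2L+1)^{1−r}, λ^{1−r}) = λ^{1−r}; and ρ_r < ρ^DM. -/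
/-!
The drift condition forces `1 - η' ≤ L'`: since `P V̄ ≥ m := inf V̄ ≥ 1`, taking the infimum
over `x` gives `m ≤ η' m + L'`. Everything else is arithmetic in logarithms. With `A = log (2L+1) > 0`,
`B = log λ < 0` and `C = log γ' < 0`, the exponent `r = (A - B)/(A - B - C)` is exactly the one
balancing `r C + (1 - r) A = (1 - r) B`, and `log ρ_r = -BC/(A - B - C)` beats
`log ρ^DM = -BC/(log J - C)` because `2L + 1 = 2L' + η' < λ J`.
-/

open MeasureTheory ProbabilityTheory ENNReal Filter

open Real

theorem one_sub_le_of_drift {X : Type*} [MeasurableSpace X] [Nonempty X]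
    (P : Kernel X X) [IsMarkovKernel P] {V : X → ℝ} {η L : ℝ} (hV : ∀ x, 1 ≤ V x)
    (hη0 : 0 ≤ η) (hη1 : η ≤ 1) (hint : ∀ x, Integrable V (P x))
    (hdrift : ∀ x, ∫ y, V y ∂(P x) ≤ η * V x + L) :
    1 - η ≤ L := by
  have hbdd : BddBelow (Set.range V) := ⟨1, by rintro _ ⟨x, rfl⟩; exact hV x⟩
  set m := ⨅ x, V x
  have hm1 : 1 ≤ m := le_ciInf hV
  have hm_le : ∀ x, m ≤ η * V x + L := fun x =>
    calc m = ∫ _, m ∂(P x) := by simp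
      _ ≤ ∫ y, V y ∂(P x) := integral_mono (integrable_const m) (hint x) (ciInf_le hbdd)
      _ ≤ η * V x + L := hdrift x
  have hm : m - L ≤ η * m := by
    rw [Real.mul_iInf_of_nonneg hη0]
    exact le_ciInf fun x => by linarith [hm_le x]
  nlinarith

section DriftConstants

variable {η L δ lam : ℝ}

theorem lt_of_eq_two_mul_mul_div_add (hη1 : η < 1) (hL : 0 < L) (hδ : 0 < δ)
    (hlam : lam = 2 * L * (1 - η) / (2 * L + δ) + η) : η < lam := by
  have : 0 < 2 * L * (1 - η) / (2 * L + δ) := div_pos (by nlinarith) (by linarith)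
  linarith

theorem lt_one_of_eq_two_mul_mul_div_add (hη1 : η < 1) (hL : 0 ≤ L) (hδ : 0 < δ)
    (hlam : lam = 2 * L * (1 - η) / (2 * L + δ) + η) : lam < 1 := by
  have : 2 * L * (1 - η) / (2 * L + δ) < 1 - η := by
    rw [div_lt_iff₀ (by linarith)]
    nlinarith
  linarith

theorem one_lt_div_one_sub_add_div (hη1 : η < 1) (hL : 1 - η ≤ L) (hδ : 0 < δ)
    (hlam : 0 < lam) : 1 < (2 * L + δ) / (1 - η) + 2 * L / lam := by
  have hF : 1 < (2 * L + δ) / (1 - η) := by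
    rw [lt_div_iff₀ (by linarith)]
    linarith
  have : 0 ≤ 2 * L / lam := div_nonneg (by linarith) hlam.le
  linarith

theorem two_mul_add_div_lt (hη0 : 0 ≤ η) (hη1 : η < 1) (hL : 1 - η ≤ L) (hδ : 0 < δ)
    (hlam : η < lam) : (2 * L + η) / lam < (2 * L + δ) / (1 - η) + 2 * L / lam := by
  have hlam0 : 0 < lam := hη0.trans_lt hlam
  have hF : 1 < (2 * L + δ) / (1 - η) := by
    rw [lt_div_iff₀ (by linarith)]
    linarith
  have : η / lam < 1 := (div_lt_one hlam0).mpr hlam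
  calc (2 * L + η) / lam = η / lam + 2 * L / lam := by ring
    _ < _ := by linarith

end DriftConstants

section RateExponent

/-- The exponent `r` of the interpolated rate `γ^r a^(1-r)`, with `a = 2L + 1`. -/
noncomputable def rateExponent (a lam γ : ℝ) : ℝ :=
  (log a - log lam) / (log a - log lam - log γ)

variable {a lam γ : ℝ}

theorem one_sub_rateExponent (hD : log a - log lam - log γ ≠ 0) :
    1 - rateExponent a lam γ = -log γ / (log a - log lam - log γ) := by
  unfold rateExponent
  field_simp
  ring

variable (ha : 1 < a) (hlam0 : 0 < lam) (hlam1 : lam < 1) (hγ0 : 0 < γ) (hγ1 : γ < 1)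
include ha hlam0 hlam1 hγ0 hγ1

theorem log_div_lt_rateExponent :
    log a / (log a - log γ) < rateExponent a lam γ := by
  have hA := log_pos ha
  have hB := log_neg hlam0 hlam1
  have hC := log_neg hγ0 hγ1
  rw [rateExponent, div_lt_div_iff₀ (by linarith) (by linarith)]
  nlinarith [mul_pos_of_neg_of_neg hB hC]

theorem rateExponent_lt_one : rateExponent a lam γ < 1 := by
  have hB := log_neg hlam0 hlam1
  have hC := log_neg hγ0 hγ1
  rw [rateExponent, div_lt_one (by linarith [log_pos ha])]
  linarith

theorem rpow_rateExponent_mul_rpow_one_sub :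
    γ ^ rateExponent a lam γ * a ^ (1 - rateExponent a lam γ)
      = lam ^ (1 - rateExponent a lam γ) := by
  have hD : log a - log lam - log γ ≠ 0 := by
    linarith [log_pos ha, log_neg hlam0 hlam1, log_neg hγ0 hγ1]
  rw [rpow_def_of_pos hγ0, rpow_def_of_pos (by linarith), rpow_def_of_pos hlam0, ← exp_add,
    one_sub_rateExponent hD, rateExponent]
  congr 1
  field_simp
  ring

theorem rpow_one_sub_rateExponent_lt {J : ℝ} (hJ : a / lam < J) :
    lam ^ (1 - rateExponent a lam γ) < exp (-(log lam * log γ) / (log J - log γ)) := by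
  have hA := log_pos ha
  have hB := log_neg hlam0 hlam1
  have hC := log_neg hγ0 hγ1
  have hAB : log a - log lam < log J := by
    rw [← log_div (by linarith) hlam0.ne']
    exact log_lt_log (div_pos (by linarith) hlam0) hJ
  have hBC := mul_pos_of_neg_of_neg hB hC
  have hD : 0 < log a - log lam - log γ := by linarith
  rw [rpow_def_of_pos hlam0, exp_lt_exp, one_sub_rateExponent hD.ne']
  calc log lam * (-log γ / (log a - log lam - log γ))
      = -(log lam * log γ / (log a - log lam - log γ)) := by ring
    _ < -(log lam * log γ / (log J - log γ)) :=
      neg_lt_neg (div_lt_div_of_pos_left hBC (by linarith) (by linarith))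
    _ = -(log lam * log γ) / (log J - log γ) := (neg_div _ _).symm

end RateExponent

theorem stmt14_general {X : Type*}
    [MeasurableSpace X] [Nonempty X]
    (P : Kernel X X) [IsMarkovKernel P]
    -- (C1)
    (Vbar : X → ℝ) (hV1 : ∀ x, 1 ≤ Vbar x)
    (η' L' : ℝ) (hη'0 : 0 ≤ η') (hη'1 : η' < 1)
    (hC1int : ∀ x : X, Integrable Vbar (P x))
    (hC1 : ∀ x : X, (∫ y, Vbar y ∂(P x)) ≤ η' * Vbar x + L')
    -- (C2), with coupling set C' = {(x,y) : V̄(x) + V̄(y) ≤ (2L'+δ')/(1−η')}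
    (γ' δ' : ℝ) (hγ'0 : 0 < γ') (hγ'1 : γ' < 1) (hδ' : 0 < δ')
    -- the derived quantities
    (L lam J ρDM r : ℝ)
    (hLdef : L = L' + η' / 2 - 1 / 2)
    (hlamdef : lam = 2 * L' * (1 - η') / (2 * L' + δ') + η')
    (hJdef : J = (2 * L' + δ') / (1 - η') + 2 * L' / lam)
    (hρDMdef : ρDM = Real.exp (-(Real.log lam * Real.log γ') / (Real.log J - Real.log γ')))
    (hrdef : r = (Real.log (2 * L + 1) - Real.log lam) /
      (Real.log (2 * L + 1) - Real.log lam - Real.log γ')) :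
    1 - η' ≤ L' ∧ 0 < 1 - η' ∧
    η' < lam ∧ lam < 1 ∧ 1 < J ∧ 0 ≤ L ∧
    Real.log (2 * L + 1) / (Real.log (2 * L + 1) - Real.log γ') < r ∧ r < 1 ∧
    max (γ' ^ r * (2 * L + 1) ^ (1 - r)) (lam ^ (1 - r)) = lam ^ (1 - r) ∧
    lam ^ (1 - r) < ρDM := by
  have hL' : 1 - η' ≤ L' := one_sub_le_of_drift P hV1 hη'0 hη'1.le hC1int hC1
  have hη'lam : η' < lam := lt_of_eq_two_mul_mul_div_add hη'1 (by linarith) hδ' hlamdef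
  have hlam0 : 0 < lam := hη'0.trans_lt hη'lam
  have hlam1 : lam < 1 := lt_one_of_eq_two_mul_mul_div_add hη'1 (by linarith) hδ' hlamdef
  have ha : 1 < 2 * L + 1 := by linarith
  have hJ : (2 * L + 1) / lam < J := by
    rw [hJdef, show 2 * L + 1 = 2 * L' + η' by linarith]
    exact two_mul_add_div_lt hη'0 hη'1 hL' hδ' hη'lam
  change r = rateExponent (2 * L + 1) lam γ' at hrdef
  subst hrdef hρDMdef
  refine ⟨hL', by linarith, hη'lam, hlam1, ?_, by linarith,
    log_div_lt_rateExponent ha hlam0 hlam1 hγ'0 hγ'1,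
    rateExponent_lt_one ha hlam0 hlam1 hγ'0 hγ'1,
    max_eq_right (rpow_rateExponent_mul_rpow_one_sub ha hlam0 hlam1 hγ'0 hγ'1).le,
    rpow_one_sub_rateExponent_lt ha hlam0 hlam1 hγ'0 hγ'1 hJ⟩
  rw [hJdef]
  exact one_lt_div_one_sub_add_div hη'1 hL' hδ' hlam0

/-- Proposition 2 and its proof. Under (C1)-(C2) of Durmus and Moulines
(with the metric bounded by 1), the rate bound `ρ_r` from Corollary 1 with the indicated
choice of `r` is strictly smaller than the Durmus-Moulines rate `ρ^DM`. -/
theorem stmt14 {X : Type*} [MetricSpace X] [CompleteSpace X] [SecondCountableTopology X]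
    [MeasurableSpace X] [BorelSpace X] [Nonempty X]
    (hψbdd : ∀ x y : X, dist x y ≤ 1)
    (P : Kernel X X) [IsMarkovKernel P]
    -- (C1)
    (Vbar : X → ℝ) (hVmeas : Measurable Vbar) (hV1 : ∀ x, 1 ≤ Vbar x)
    (η' L' : ℝ) (hη'0 : 0 ≤ η') (hη'1 : η' < 1) (hL' : 0 ≤ L')
    (hC1int : ∀ x : X, Integrable Vbar (P x))
    (hC1 : ∀ x : X, (∫ y, Vbar y ∂(P x)) ≤ η' * Vbar x + L')
    -- (C2), with coupling set C' = {(x,y) : V̄(x) + V̄(y) ≤ (2L'+δ')/(1−η')}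
    (γ' δ' : ℝ) (hγ'0 : 0 < γ') (hγ'1 : γ' < 1) (hδ' : 0 < δ')
    (hC2C : ∀ x y : X, Vbar x + Vbar y ≤ (2 * L' + δ') / (1 - η') →
      wassDist (P x) (P y) ≤ ENNReal.ofReal (γ' * dist x y))
    (hC2Cc : ∀ x y : X, ¬(Vbar x + Vbar y ≤ (2 * L' + δ') / (1 - η')) →
      wassDist (P x) (P y) ≤ ENNReal.ofReal (dist x y))
    -- the derived quantities
    (L lam J ρDM r : ℝ)
    (hLdef : L = L' + η' / 2 - 1 / 2)
    (hlamdef : lam = 2 * L' * (1 - η') / (2 * L' + δ') + η')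
    (hJdef : J = (2 * L' + δ') / (1 - η') + 2 * L' / lam)
    (hρDMdef : ρDM = Real.exp (-(Real.log lam * Real.log γ') / (Real.log J - Real.log γ')))
    (hrdef : r = (Real.log (2 * L + 1) - Real.log lam) /
      (Real.log (2 * L + 1) - Real.log lam - Real.log γ')) :
    1 - η' ≤ L' ∧ 0 < 1 - η' ∧
    η' < lam ∧ lam < 1 ∧ 1 < J ∧ 0 ≤ L ∧
    Real.log (2 * L + 1) / (Real.log (2 * L + 1) - Real.log γ') < r ∧ r < 1 ∧
    max (γ' ^ r * (2 * L + 1) ^ (1 - r)) (lam ^ (1 - r)) = lam ^ (1 - r) ∧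
    lam ^ (1 - r) < ρDM :=
  stmt14_general P Vbar hV1 η' L' hη'0 hη'1 hC1int hC1 γ' δ' hγ'0 hγ'1 hδ' L lam J ρDM r hLdef
    hlamdef hJdef hρDMdef hrdef
end

section
/- Define Γ: ℝ × ℝ → [0,∞) by Γ(x,y) = (1/2)(1 − (sin x − sin y)/(x − y)) for x ≠ y and Γ(x,x) = (1 − cos x)/2, and define Λ: ℝ × ℝ → [0,∞) by Λ(x,y) = (x²/2 + y²/2 + 4)/(x² + y² + 1). Then for every r ∈ (0,1) and every (x,y) ∈ ℝ² with x² + y² > 2π², there exists (x', y') ∈ ℝ² with x'² + y'² ≤ 2π² such that Γ(x,y)^r Λ(x,y)^{1−r} < Γ(x',y')^r Λ(x',y')^{1−r}. Consequently, for every r ∈ (0,1), the set of maximizers of (x,y) ↦ Γ(x,y)^r Λ(x,y)^{1−r} over ℝ² is contained in C₀ = {(x,y) : x² + y² ≤ 2π²}, and sup over ℝ² of Γ^r Λ^{1−r} equals the supremum over C₀. -/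
/-- Proposition 3. For the perturbed autoregressive chain with
`Λ(x,y) = (x²/2 + y²/2 + 4)/(x² + y² + 1)`, the maximizers of `Γ^r Λ^{1−r}` lie in
`C₀ = {(x,y) : x² + y² ≤ 2π²}`, and the supremum over `ℝ²` equals that over `C₀`. -/
theorem stmt15 (Γ Λ : ℝ → ℝ → ℝ)
    (hΓoff : ∀ x y : ℝ, x ≠ y →
      Γ x y = (1 / 2) * (1 - (Real.sin x - Real.sin y) / (x - y)))
    (hΓdiag : ∀ x : ℝ, Γ x x = (1 - Real.cos x) / 2)
    (hΛ : ∀ x y : ℝ, Λ x y = (x ^ 2 / 2 + y ^ 2 / 2 + 4) / (x ^ 2 + y ^ 2 + 1)) :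
    ∀ r : ℝ, 0 < r → r < 1 →
      (∀ x y : ℝ, 2 * Real.pi ^ 2 < x ^ 2 + y ^ 2 →
        ∃ x' y' : ℝ, x' ^ 2 + y' ^ 2 ≤ 2 * Real.pi ^ 2 ∧
          Γ x y ^ r * Λ x y ^ (1 - r) < Γ x' y' ^ r * Λ x' y' ^ (1 - r)) ∧
      (∀ x y : ℝ,
        (∀ u v : ℝ, Γ u v ^ r * Λ u v ^ (1 - r) ≤ Γ x y ^ r * Λ x y ^ (1 - r)) →
        x ^ 2 + y ^ 2 ≤ 2 * Real.pi ^ 2) ∧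
      sSup (Set.range fun p : ℝ × ℝ => Γ p.1 p.2 ^ r * Λ p.1 p.2 ^ (1 - r)) =
        sSup ((fun p : ℝ × ℝ => Γ p.1 p.2 ^ r * Λ p.1 p.2 ^ (1 - r)) ''
          {p : ℝ × ℝ | p.1 ^ 2 + p.2 ^ 2 ≤ 2 * Real.pi ^ 2}) := by
  intro r hr0 hr1
  have hπ := Real.pi_pos
  set Λ₀ : ℝ := (Real.pi ^ 2 + 4) / (2 * Real.pi ^ 2 + 1) with hΛ₀
  -- Γ bounds
  have hΓ01 : ∀ x y : ℝ, 0 ≤ Γ x y ∧ Γ x y ≤ 1 := by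
    intro x y
    rcases eq_or_ne x y with h | h
    · subst h; rw [hΓdiag]
      have h1 := Real.neg_one_le_cos x
      have h2 := Real.cos_le_one x
      constructor <;> linarith
    · rw [hΓoff x y h]
      have hlip : |Real.sin x - Real.sin y| ≤ |x - y| := by
        rw [Real.sin_sub_sin]
        have h1 : |Real.sin ((x - y) / 2)| ≤ |(x - y) / 2| := Real.abs_sin_le_abs
        have h2 : |Real.cos ((x + y) / 2)| ≤ 1 := Real.abs_cos_le_one _
        calc |2 * Real.sin ((x - y) / 2) * Real.cos ((x + y) / 2)|
            = 2 * |Real.sin ((x - y) / 2)| * |Real.cos ((x + y) / 2)| := by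
              rw [abs_mul, abs_mul]; norm_num
          _ ≤ 2 * |(x - y) / 2| * 1 := by
              apply mul_le_mul _ h2 (abs_nonneg _) (by positivity)
              nlinarith [abs_nonneg (Real.sin ((x-y)/2))]
          _ = |x - y| := by rw [abs_div, abs_two]; ring
      have hq : |(Real.sin x - Real.sin y) / (x - y)| ≤ 1 := by
        rw [abs_div]
        exact div_le_one_of_le₀ hlip (abs_nonneg _)
      rw [abs_le] at hq
      constructor <;> nlinarith [hq.1, hq.2]
  -- Λ bounds
  have hΛpos : ∀ x y : ℝ, 0 < Λ x y := by
    intro x y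
    rw [hΛ]
    apply div_pos <;> positivity
  have hΛle4 : ∀ x y : ℝ, Λ x y ≤ 4 := by
    intro x y
    rw [hΛ, div_le_iff₀ (by positivity)]
    nlinarith [sq_nonneg x, sq_nonneg y]
  have hΛlt : ∀ x y : ℝ, 2 * Real.pi ^ 2 < x ^ 2 + y ^ 2 → Λ x y < Λ₀ := by
    intro x y h
    rw [hΛ, hΛ₀, div_lt_div_iff₀ (by positivity) (by positivity)]
    nlinarith [Real.pi_pos]
  have hΛππ : Λ Real.pi Real.pi = Λ₀ := by
    rw [hΛ, hΛ₀]; congr 1 <;> ring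
  have hΓππ : Γ Real.pi Real.pi = 1 := by
    rw [hΓdiag, Real.cos_pi]; norm_num
  have hΛ₀pos : 0 < Λ₀ := hΛππ ▸ hΛpos Real.pi Real.pi
  -- key strict inequality outside C₀
  have key : ∀ x y : ℝ, 2 * Real.pi ^ 2 < x ^ 2 + y ^ 2 →
      Γ x y ^ r * Λ x y ^ (1 - r) <
        Γ Real.pi Real.pi ^ r * Λ Real.pi Real.pi ^ (1 - r) := by
    intro x y h
    rw [hΓππ, hΛππ, Real.one_rpow, one_mul]
    have h1 : Γ x y ^ r ≤ 1 :=
      Real.rpow_le_one (hΓ01 x y).1 (hΓ01 x y).2 hr0.le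
    have h2 : Λ x y ^ (1 - r) < Λ₀ ^ (1 - r) :=
      Real.rpow_lt_rpow (hΛpos x y).le (hΛlt x y h) (by linarith)
    have h3 : (0:ℝ) ≤ Λ x y ^ (1 - r) := Real.rpow_nonneg (hΛpos x y).le _
    exact lt_of_le_of_lt (mul_le_of_le_one_left h3 h1) h2
  have hππC : Real.pi ^ 2 + Real.pi ^ 2 ≤ 2 * Real.pi ^ 2 := le_of_eq (by ring)
  refine ⟨fun x y h => ⟨Real.pi, Real.pi, hππC, key x y h⟩, ?_, ?_⟩
  · intro x y hmax
    by_contra h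
    push_neg at h
    exact absurd (hmax Real.pi Real.pi) (not_le.mpr (key x y h))
  · set f : ℝ × ℝ → ℝ := fun p => Γ p.1 p.2 ^ r * Λ p.1 p.2 ^ (1 - r) with hf
    have hf4 : ∀ p : ℝ × ℝ, f p ≤ 4 := by
      intro p
      have h1 : Γ p.1 p.2 ^ r ≤ 1 :=
        Real.rpow_le_one (hΓ01 p.1 p.2).1 (hΓ01 p.1 p.2).2 hr0.le
      have h3 : (0:ℝ) ≤ Λ p.1 p.2 ^ (1 - r) := Real.rpow_nonneg (hΛpos p.1 p.2).le _
      have h2 : Λ p.1 p.2 ^ (1 - r) ≤ 4 := by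
        calc Λ p.1 p.2 ^ (1 - r) ≤ (4:ℝ) ^ (1 - r) :=
              Real.rpow_le_rpow (hΛpos p.1 p.2).le (hΛle4 p.1 p.2) (by linarith)
          _ ≤ (4:ℝ) ^ (1:ℝ) :=
              Real.rpow_le_rpow_of_exponent_le (by norm_num) (by linarith)
          _ = 4 := Real.rpow_one 4
      calc f p ≤ Λ p.1 p.2 ^ (1 - r) := mul_le_of_le_one_left h3 h1
        _ ≤ 4 := h2
    have hbdd : BddAbove (Set.range f) := ⟨4, by rintro _ ⟨p, rfl⟩; exact hf4 p⟩
    have hsub : f '' {p : ℝ × ℝ | p.1 ^ 2 + p.2 ^ 2 ≤ 2 * Real.pi ^ 2} ⊆ Set.range f :=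
      Set.image_subset_range f _
    have hbddC : BddAbove (f '' {p : ℝ × ℝ | p.1 ^ 2 + p.2 ^ 2 ≤ 2 * Real.pi ^ 2}) :=
      hbdd.mono hsub
    have hmemππ : ((Real.pi, Real.pi) : ℝ × ℝ) ∈
        {p : ℝ × ℝ | p.1 ^ 2 + p.2 ^ 2 ≤ 2 * Real.pi ^ 2} := hππC
    apply le_antisymm
    · apply csSup_le (Set.range_nonempty f)
      rintro _ ⟨p, rfl⟩
      by_cases hp : p.1 ^ 2 + p.2 ^ 2 ≤ 2 * Real.pi ^ 2
      · exact le_csSup hbddC ⟨p, hp, rfl⟩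
      · push_neg at hp
        exact (key p.1 p.2 hp).le.trans
          (le_csSup hbddC ⟨(Real.pi, Real.pi), hmemππ, rfl⟩)
    · exact csSup_le_csSup hbdd ⟨f (Real.pi, Real.pi),
        ⟨(Real.pi, Real.pi), hmemππ, rfl⟩⟩ hsub
end

section
/- Define g: ℝ → ℝ by g(x) = x/2 − (sin x)/2, Γ: ℝ × ℝ → [0,∞) by Γ(x,y) = (1/2)(1 − (sin x − sin y)/(x − y)) for x ≠ y and Γ(x,x) = (1 − cos x)/2, and Λ: ℝ × ℝ → [0,∞) by Λ(x,y) = (g(x)² + g(y)² + 3)/(x² + y² + 1). Then for every r ∈ (0,1) and every (x,y) ∈ ℝ² with |x| > 26 or |y| > 26, there exists (x', y') ∈ ℝ² with |x'| ≤ 26 and |y'| ≤ 26 such that Γ(x,y)^r Λ(x,y)^{1−r} < Γ(x',y')^r Λ(x',y')^{1−r}. Consequently, for every r ∈ (0,1), the set of maximizers of (x,y) ↦ Γ(x,y)^r Λ(x,y)^{1−r} over ℝ² is contained in C₀' = {(x,y) : |x| ≤ 26, |y| ≤ 26}. -/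
/-- Proposition 4. For the perturbed autoregressive chain with the exact
`Λ(x,y) = (g(x)² + g(y)² + 3)/(x² + y² + 1)` where `g(x) = x/2 − (sin x)/2`, the maximizers
of `Γ^r Λ^{1−r}` lie in the box `C₀' = {(x,y) : |x| ≤ 26, |y| ≤ 26}`. -/
theorem stmt16 (g : ℝ → ℝ) (Γ Λ : ℝ → ℝ → ℝ)
    (hg : ∀ x : ℝ, g x = x / 2 - Real.sin x / 2)
    (hΓoff : ∀ x y : ℝ, x ≠ y →
      Γ x y = (1 / 2) * (1 - (Real.sin x - Real.sin y) / (x - y)))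
    (hΓdiag : ∀ x : ℝ, Γ x x = (1 - Real.cos x) / 2)
    (hΛ : ∀ x y : ℝ, Λ x y = (g x ^ 2 + g y ^ 2 + 3) / (x ^ 2 + y ^ 2 + 1)) :
    ∀ r : ℝ, 0 < r → r < 1 →
      (∀ x y : ℝ, 26 < |x| ∨ 26 < |y| →
        ∃ x' y' : ℝ, |x'| ≤ 26 ∧ |y'| ≤ 26 ∧
          Γ x y ^ r * Λ x y ^ (1 - r) < Γ x' y' ^ r * Λ x' y' ^ (1 - r)) ∧
      (∀ x y : ℝ,
        (∀ u v : ℝ, Γ u v ^ r * Λ u v ^ (1 - r) ≤ Γ x y ^ r * Λ x y ^ (1 - r)) →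
        |x| ≤ 26 ∧ |y| ≤ 26) := by
  intro r hr0 hr1
  have h1r : 0 < 1 - r := by linarith
  -- Γ takes values in [0,1]
  have hΓ01 : ∀ x y : ℝ, 0 ≤ Γ x y ∧ Γ x y ≤ 1 := by
    intro x y
    rcases eq_or_ne x y with h | h
    · subst h
      rw [hΓdiag]
      constructor <;> nlinarith [Real.cos_le_one x, Real.neg_one_le_cos x]
    · rw [hΓoff x y h]
      have hxy : x - y ≠ 0 := sub_ne_zero.mpr h
      have hs : |Real.sin x - Real.sin y| ≤ |x - y| := by
        have h1 : |Real.sin ((x - y) / 2)| ≤ |x - y| / 2 := by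
          have := Real.abs_sin_le_abs (x := (x - y) / 2)
          rwa [abs_div, abs_two] at this
        have h2 : |Real.cos ((x + y) / 2)| ≤ 1 := Real.abs_cos_le_one _
        rw [Real.sin_sub_sin, abs_mul, abs_mul, abs_two]
        nlinarith [abs_nonneg (Real.sin ((x - y) / 2)), abs_nonneg (Real.cos ((x + y) / 2)),
          abs_nonneg (x - y)]
      have h2 : |(Real.sin x - Real.sin y) / (x - y)| ≤ 1 := by
        rw [abs_div, div_le_one (abs_pos.mpr hxy)]
        exact hs
      obtain ⟨h3, h4⟩ := abs_le.mp h2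
      constructor <;> nlinarith
  -- Λ is nonnegative
  have hΛ0 : ∀ x y : ℝ, 0 ≤ Λ x y := by
    intro x y; rw [hΛ]; positivity
  -- bound on g²
  have hgabs : ∀ x : ℝ, g x ^ 2 ≤ (|x| + 1) ^ 2 / 4 := by
    intro x
    rw [hg]
    have h1 : -|x| ≤ x * Real.sin x := by
      nlinarith [le_abs_self x, neg_abs_le x, Real.sin_le_one x, Real.neg_one_le_sin x]
    nlinarith [Real.sin_le_one x, Real.neg_one_le_sin x, abs_nonneg x, sq_abs x]
  -- Λ ≤ 0.3 outside the box
  have hout : ∀ x y : ℝ, (26 < |x| ∨ 26 < |y|) → Λ x y ≤ 0.3 := by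
    intro x y h
    rw [hΛ, div_le_iff₀ (by positivity)]
    have hgx := hgabs x
    have hgy := hgabs y
    have hx2 : |x| ^ 2 = x ^ 2 := sq_abs x
    have hy2 : |y| ^ 2 = y ^ 2 := sq_abs y
    rcases h with h | h
    · nlinarith [sq_nonneg (|y| - 5), sq_nonneg (|x| - 26), abs_nonneg y]
    · nlinarith [sq_nonneg (|x| - 5), sq_nonneg (|y| - 26), abs_nonneg x]
  -- values at (π, π)
  have hgpi : g Real.pi = Real.pi / 2 := by rw [hg, Real.sin_pi]; ring
  have hΓpi : Γ Real.pi Real.pi = 1 := by rw [hΓdiag, Real.cos_pi]; norm_num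
  have hΛpi : (0.38 : ℝ) ≤ Λ Real.pi Real.pi := by
    rw [hΛ, hgpi, le_div_iff₀ (by positivity)]
    nlinarith [Real.pi_gt_three, Real.pi_lt_d2]
  have hpiabs : |Real.pi| ≤ 26 := by
    rw [abs_of_pos Real.pi_pos]
    linarith [Real.pi_lt_d2]
  -- the key strict comparison
  have key : ∀ x y : ℝ, (26 < |x| ∨ 26 < |y|) →
      Γ x y ^ r * Λ x y ^ (1 - r) < Γ Real.pi Real.pi ^ r * Λ Real.pi Real.pi ^ (1 - r) := by
    intro x y h
    have c1 : Γ x y ^ r ≤ 1 := Real.rpow_le_one (hΓ01 x y).1 (hΓ01 x y).2 hr0.le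
    have c2 : Λ x y ^ (1 - r) ≤ (0.3 : ℝ) ^ (1 - r) :=
      Real.rpow_le_rpow (hΛ0 x y) (hout x y h) h1r.le
    have c3 : (0.3 : ℝ) ^ (1 - r) < (0.38 : ℝ) ^ (1 - r) :=
      Real.rpow_lt_rpow (by norm_num) (by norm_num) h1r
    have c4 : (0.38 : ℝ) ^ (1 - r) ≤ Λ Real.pi Real.pi ^ (1 - r) :=
      Real.rpow_le_rpow (by norm_num) hΛpi h1r.le
    calc Γ x y ^ r * Λ x y ^ (1 - r)
        ≤ 1 * ((0.3 : ℝ) ^ (1 - r)) :=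
          mul_le_mul c1 c2 (Real.rpow_nonneg (hΛ0 x y) _) (by norm_num)
      _ = (0.3 : ℝ) ^ (1 - r) := one_mul _
      _ < (0.38 : ℝ) ^ (1 - r) := c3
      _ ≤ Λ Real.pi Real.pi ^ (1 - r) := c4
      _ = Γ Real.pi Real.pi ^ r * Λ Real.pi Real.pi ^ (1 - r) := by
          rw [hΓpi, Real.one_rpow, one_mul]
  constructor
  · intro x y h
    exact ⟨Real.pi, Real.pi, hpiabs, hpiabs, key x y h⟩
  · intro x y hmax
    by_contra hc
    have h' := not_and_or.mp hc
    push_neg at h'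
    exact absurd (hmax Real.pi Real.pi) (not_le.mpr (key x y h'))
end

section
/- Define Γ: ℝ × ℝ → [0,∞) by Γ(x,y) = (1/2)(1 − (sin x − sin y)/(x − y)) for x ≠ y and Γ(x,x) = (1 − cos x)/2. Then: (i) sup_{(x,y) ∈ ℝ²} Γ(x,y) = 1; (ii) for every d with 6 < d < 2π², sup over {(x,y) : x² + y² < d} of Γ(x,y) < 1; and (iii) for every d ≥ 2π², sup over {(x,y) : x² + y² < d} of Γ(x,y) = Γ(π, π) = 1. -/
open Real

private lemma sinc01 (u : ℝ) (hπ : |u| ≤ Real.pi) : 0 ≤ Real.sin u / u ∧ Real.sin u / u ≤ 1 := by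
  rcases lt_trichotomy u 0 with hu | hu | hu
  · have h1 : 0 ≤ Real.sin (-u) := Real.sin_nonneg_of_nonneg_of_le_pi (by linarith)
      (by rw [abs_of_neg hu] at hπ; linarith)
    have h2 : Real.sin (-u) ≤ -u := Real.sin_le (by linarith)
    rw [Real.sin_neg] at h1 h2
    constructor
    · exact div_nonneg_of_nonpos (by linarith) hu.le
    · rw [div_le_one_of_neg hu]; linarith
  · simp [hu]
  · have h1 : 0 ≤ Real.sin u := Real.sin_nonneg_of_nonneg_of_le_pi hu.le
      (by rwa [abs_of_pos hu] at hπ)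
    have h2 : Real.sin u ≤ u := Real.sin_le hu.le
    exact ⟨div_nonneg h1 hu.le, (div_le_one hu).mpr h2⟩

private lemma ratio_ge_neg_one (x y : ℝ) (h : x ≠ y) :
    -1 ≤ (Real.sin x - Real.sin y) / (x - y) := by
  have h0 : (0:ℝ) < |x - y| := abs_pos.mpr (sub_ne_zero.mpr h)
  have habs : |Real.sin x - Real.sin y| ≤ |x - y| := by
    rw [Real.sin_sub_sin]
    have h1 : |Real.sin ((x - y) / 2)| ≤ |(x - y) / 2| := Real.abs_sin_le_abs
    have h2 : |Real.cos ((x + y) / 2)| ≤ 1 := Real.abs_cos_le_one _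
    rw [abs_mul, abs_mul, abs_two]
    calc 2 * |Real.sin ((x - y) / 2)| * |Real.cos ((x + y) / 2)|
        ≤ 2 * |(x - y) / 2| * 1 := by
          apply mul_le_mul _ h2 (abs_nonneg _) (by positivity)
          exact mul_le_mul_of_nonneg_left h1 (by norm_num)
      _ = |x - y| := by rw [abs_div, abs_two]; ring
  have h1 : |(Real.sin x - Real.sin y) / (x - y)| ≤ 1 := by
    rw [abs_div, div_le_one h0]; exact habs
  have := neg_abs_le ((Real.sin x - Real.sin y) / (x - y))
  linarith [abs_le.mp h1]

private lemma ratio_ge (x y ρ : ℝ) (h : x ≠ y) (hρπ : ρ ≤ Real.pi) (hρ0 : Real.cos ρ ≤ 0)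
    (hs : |(x + y) / 2| ≤ ρ) (hu : |(x - y) / 2| ≤ ρ) :
    Real.cos ρ ≤ (Real.sin x - Real.sin y) / (x - y) := by
  set s := (x + y) / 2 with hsdef
  set u := (x - y) / 2 with hudef
  have hu0 : u ≠ 0 := by
    simp only [hudef, div_ne_zero_iff]
    exact ⟨sub_ne_zero.mpr h, two_ne_zero⟩
  have hxy : x - y = 2 * u := by rw [hudef]; ring
  have key : (Real.sin x - Real.sin y) / (x - y) = (Real.sin u / u) * Real.cos s := by
    rw [Real.sin_sub_sin, ← hsdef, ← hudef, hxy]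
    field_simp
  have hsinc := sinc01 u (hu.trans hρπ)
  have hcs : Real.cos ρ ≤ Real.cos s := by
    have : Real.cos ρ ≤ Real.cos |s| :=
      Real.cos_le_cos_of_nonneg_of_le_pi (abs_nonneg s) hρπ hs
    rwa [Real.cos_abs] at this
  rw [key]
  rcases le_or_gt 0 (Real.cos s) with hc | hc
  · exact hρ0.trans (mul_nonneg hsinc.1 hc)
  · nlinarith [hsinc.1, hsinc.2]

private lemma sq_half_le {x y ρ : ℝ} (hρ : 0 ≤ ρ) (hd : x ^ 2 + y ^ 2 ≤ 2 * ρ ^ 2) :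
    |(x + y) / 2| ≤ ρ ∧ |(x - y) / 2| ≤ ρ := by
  constructor <;> [skip; skip] <;>
  · rw [← Real.sqrt_sq hρ, ← Real.sqrt_sq_eq_abs]
    apply Real.sqrt_le_sqrt
    nlinarith [sq_nonneg (x - y), sq_nonneg (x + y)]

/-- Properties of the exact Lipschitz ratio `Γ` of
`g(x) = x/2 − (sin x)/2`: (i) its supremum over `ℝ²` is `1`, (ii) its supremum over the
open disc `{x² + y² < d}` is strictly less than `1` for `6 < d < 2π²`, and (iii) for
`d ≥ 2π²` the supremum over the disc equals `Γ(π,π) = 1`. -/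
theorem stmt17 (Γ : ℝ → ℝ → ℝ)
    (hΓoff : ∀ x y : ℝ, x ≠ y →
      Γ x y = (1 / 2) * (1 - (Real.sin x - Real.sin y) / (x - y)))
    (hΓdiag : ∀ x : ℝ, Γ x x = (1 - Real.cos x) / 2) :
    -- (i)
    sSup (Set.range fun p : ℝ × ℝ => Γ p.1 p.2) = 1 ∧
    -- (ii)
    (∀ d : ℝ, 6 < d → d < 2 * Real.pi ^ 2 →
      sSup ((fun p : ℝ × ℝ => Γ p.1 p.2) '' {p : ℝ × ℝ | p.1 ^ 2 + p.2 ^ 2 < d}) < 1) ∧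
    -- (iii)
    (∀ d : ℝ, 2 * Real.pi ^ 2 ≤ d →
      sSup ((fun p : ℝ × ℝ => Γ p.1 p.2) '' {p : ℝ × ℝ | p.1 ^ 2 + p.2 ^ 2 < d}) =
        Γ Real.pi Real.pi ∧ Γ Real.pi Real.pi = 1) := by
  -- global bound
  have hbound : ∀ x y : ℝ, Γ x y ≤ 1 := by
    intro x y
    rcases eq_or_ne x y with rfl | h
    · rw [hΓdiag]; linarith [Real.neg_one_le_cos x]
    · rw [hΓoff x y h]; linarith [ratio_ge_neg_one x y h]
  have hΓπ : Γ Real.pi Real.pi = 1 := by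
    rw [hΓdiag, Real.cos_pi]; norm_num
  have hpi := Real.pi_gt_three
  refine ⟨?_, ?_, ?_⟩
  · -- (i)
    apply le_antisymm
    · apply Real.sSup_le _ one_pos.le
      rintro _ ⟨p, rfl⟩
      exact hbound p.1 p.2
    · have : Γ Real.pi Real.pi ≤ sSup (Set.range fun p : ℝ × ℝ => Γ p.1 p.2) := by
        have hb : BddAbove (Set.range fun p : ℝ × ℝ => Γ p.1 p.2) := by
          refine ⟨1, ?_⟩
          rintro _ ⟨p, rfl⟩
          exact hbound p.1 p.2
        exact le_csSup hb ⟨(Real.pi, Real.pi), rfl⟩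
      rwa [hΓπ] at this
  · -- (ii)
    intro d hd6 hdπ
    set ρ := Real.sqrt (d / 2) with hρdef
    have hd0 : (0:ℝ) ≤ d / 2 := by linarith
    have hρsq : ρ ^ 2 = d / 2 := Real.sq_sqrt hd0
    have hρ0 : 0 ≤ ρ := Real.sqrt_nonneg _
    have hρπ : ρ < Real.pi := by
      nlinarith [hρsq]
    have hρhalf : Real.pi / 2 < ρ := by
      nlinarith [Real.pi_lt_d2]
    have hcosneg : Real.cos ρ < 0 :=
      Real.cos_neg_of_pi_div_two_lt_of_lt hρhalf (by linarith)
    have hcosgt : -1 < Real.cos ρ := by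
      have := Real.cos_lt_cos_of_nonneg_of_le_pi hρ0 le_rfl hρπ
      rwa [Real.cos_pi] at this
    have hmem : ∀ p : ℝ × ℝ, p.1 ^ 2 + p.2 ^ 2 < d → Γ p.1 p.2 ≤ (1 - Real.cos ρ) / 2 := by
      rintro ⟨x, y⟩ hp
      simp only at hp ⊢
      have hsq : x ^ 2 + y ^ 2 ≤ 2 * ρ ^ 2 := by rw [hρsq]; linarith
      obtain ⟨hs, hu⟩ := sq_half_le hρ0 hsq
      rcases eq_or_ne x y with rfl | h
      · rw [hΓdiag]
        have : Real.cos ρ ≤ Real.cos |(x + x) / 2| :=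
          Real.cos_le_cos_of_nonneg_of_le_pi (abs_nonneg _) hρπ.le hs
        rw [Real.cos_abs] at this
        have hxx : (x + x) / 2 = x := by ring
        rw [hxx] at this
        linarith
      · rw [hΓoff x y h]
        have := ratio_ge x y ρ h hρπ.le hcosneg.le hs hu
        linarith
    calc sSup ((fun p : ℝ × ℝ => Γ p.1 p.2) '' {p : ℝ × ℝ | p.1 ^ 2 + p.2 ^ 2 < d})
        ≤ (1 - Real.cos ρ) / 2 := by
          apply csSup_le
          · refine ⟨Γ 0 0, ⟨(0, 0), ?_, rfl⟩⟩
            simp only [Set.mem_setOf_eq]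
            norm_num
            linarith
          · rintro _ ⟨p, hp, rfl⟩
            exact hmem p hp
      _ < 1 := by linarith
  · -- (iii)
    intro d hd
    have hπpos := Real.pi_pos
    refine ⟨?_, hΓπ⟩
    rw [hΓπ]
    have hbdd : BddAbove ((fun p : ℝ × ℝ => Γ p.1 p.2) '' {p : ℝ × ℝ | p.1 ^ 2 + p.2 ^ 2 < d}) := by
      exact ⟨1, by rintro _ ⟨p, _, rfl⟩; exact hbound p.1 p.2⟩
    apply le_antisymm
    · apply csSup_le
      · refine ⟨Γ 0 0, ⟨(0, 0), ?_, rfl⟩⟩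
        simp only [Set.mem_setOf_eq]
        nlinarith
      · rintro _ ⟨p, _, rfl⟩; exact hbound p.1 p.2
    · -- 1 ≤ sSup, via limit along t → π⁻
      have htend : Filter.Tendsto (fun t : ℝ => (1 - Real.cos t) / 2)
          (nhdsWithin Real.pi (Set.Iio Real.pi)) (nhds 1) := by
        have hc : Continuous fun t : ℝ => (1 - Real.cos t) / 2 := by continuity
        have := (hc.tendsto Real.pi).mono_left
          (nhdsWithin_le_nhds (s := Set.Iio Real.pi))
        simpa [Real.cos_pi] using this
      apply le_of_tendsto htend
      have hIoo : Set.Ioo 0 Real.pi ∈ nhdsWithin Real.pi (Set.Iio Real.pi) :=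
        Ioo_mem_nhdsLT_of_mem ⟨hπpos, le_rfl⟩
      filter_upwards [hIoo] with t ht
      have hmem : (t, t) ∈ {p : ℝ × ℝ | p.1 ^ 2 + p.2 ^ 2 < d} := by
        simp only [Set.mem_setOf_eq]
        nlinarith [ht.1, ht.2]
      have : Γ t t ≤ sSup ((fun p : ℝ × ℝ => Γ p.1 p.2) '' {p : ℝ × ℝ | p.1 ^ 2 + p.2 ^ 2 < d}) :=
        le_csSup hbdd ⟨(t, t), hmem, rfl⟩
      rwa [hΓdiag] at this
end
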